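/- With the setup as in the context, set d̄ := max_{i∈B} d_i/g_i(0) and d := min_{i∈A} c_i/g_i(0). Then D(0,s) − (1/2)·log s converges to (1/2)·log(d̄/d) as s → ∞. (This is the estimate for the Hilbert distance from the starting point of an earthquake ray to the point at time s.) -/
import Mathlib


open Filter

/-- The abstract Hilbert distance between two strictly positive vectors:
`D(u,v) = (1/2)·max_i log(v i/u i) + (1/2)·max_i log(u i/v i)`. -/
noncomputable def Dtil {I : Type*} [Fintype I] [Nonempty I] (u v : I → ℝ) : ℝ :=
  (1 / 2) * (Finset.univ.sup' Finset.univ_nonempty fun i => Real.log (v i / u i)) +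
  (1 / 2) * (Finset.univ.sup' Finset.univ_nonempty fun i => Real.log (u i / v i))

/-- max of a function tending to `-∞` and one tending to `L` tends to `L`. -/
lemma tendsto_max_of_atBot_left {β : Type*} {l : Filter β} {u v : β → ℝ} {L : ℝ}
    (hu : Tendsto u l atBot) (hv : Tendsto v l (nhds L)) :
    Tendsto (fun x => max (u x) (v x)) l (nhds L) := by
  refine hv.congr' ?_
  filter_upwards [hu.eventually_le_atBot (L - 1), hv.eventually (eventually_gt_nhds
    (show L - 1 < L by linarith))] with x h1 h2
  exact (max_eq_right (by linarith)).symm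

/-- sup' of finitely many functions each tending to `-∞` tends to `-∞`. -/
lemma tendsto_sup'_atBot {ι β : Type*} {l : Filter β} (s : Finset ι) (hs : s.Nonempty)
    {f : ι → β → ℝ} (h : ∀ i ∈ s, Tendsto (f i) l atBot) :
    Tendsto (fun x => s.sup' hs fun i => f i x) l atBot := by
  rw [tendsto_atBot]
  intro b
  have hev : ∀ᶠ x in l, ∀ i ∈ s, f i x ≤ b :=
    eventually_all_finset s |>.2 fun i hi => (h i hi).eventually_le_atBot b
  filter_upwards [hev] with x hx
  exact Finset.sup'_le _ _ fun i hi => hx i hi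

/-- The Hilbert distance from the starting point of an (abstracted) earthquake ray to
the point at time `s` satisfies `D(0,s) − (1/2)·log s → (1/2)·log(d̄/d)` as `s → ∞`,
where `d̄ = max_{i∈B} d i/g i 0` and `d = min_{i∈A} c i/g i 0`. -/
theorem stmt11 {I : Type*} [Fintype I] [Nonempty I]
    (ρ₀ : ℝ) (hρ₀ : 0 < ρ₀)
    (g : I → ℝ → ℝ) (hg : ∀ i, ∀ t : ℝ, 0 ≤ t → 2 * ρ₀ ≤ g i t)
    (A B : Finset I) (hA : A.Nonempty) (hB : B.Nonempty)
    (hcover : ∀ i : I, i ∈ A ∨ i ∈ B) (hdisj : Disjoint A B)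
    (c : I → ℝ)
    (hc : ∀ i ∈ A, 0 < c i ∧ Tendsto (fun t : ℝ => g i t) atTop (nhds (c i)))
    (d : I → ℝ)
    (hd : ∀ i ∈ B, 0 < d i ∧ Tendsto (fun t : ℝ => g i t / t) atTop (nhds (d i))) :
    Tendsto
      (fun s : ℝ => Dtil (fun i => g i 0) (fun i => g i s) - (1 / 2) * Real.log s)
      atTop
      (nhds ((1 / 2) *
        Real.log ((B.sup' hB fun i => d i / g i 0) / (A.inf' hA fun i => c i / g i 0)))) := by
  classical
  have hgpos : ∀ i, ∀ t : ℝ, 0 ≤ t → 0 < g i t := fun i t ht =>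
    lt_of_lt_of_le (by linarith) (hg i t ht)
  have g0pos : ∀ i, 0 < g i 0 := fun i => hgpos i 0 le_rfl
  set dbar : ℝ := B.sup' hB fun i => d i / g i 0 with hdbar_def
  set dlow : ℝ := A.inf' hA fun i => c i / g i 0 with hdlow_def
  have hdbar_pos : 0 < dbar := by
    obtain ⟨j, hj⟩ := hB
    rw [hdbar_def]
    exact lt_of_lt_of_le (div_pos (hd j hj).1 (g0pos j))
      (Finset.le_sup' (fun i => d i / g i 0) hj)
  have hdlow_pos : 0 < dlow := by
    rw [hdlow_def, Finset.lt_inf'_iff]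
    exact fun i hi => div_pos (hc i hi).1 (g0pos i)
  -- splitting sup over univ into sups over A and B
  have hU : A ∪ B = (Finset.univ : Finset I) := by
    ext i; simpa using hcover i
  have key : ∀ f : I → ℝ, Finset.univ.sup' Finset.univ_nonempty f
      = max (A.sup' hA f) (B.sup' hB f) := by
    intro f
    rw [← Finset.sup'_union hA hB f]
    exact Finset.sup'_congr Finset.univ_nonempty hU.symm fun _ _ => rfl
  ------------------------------------------------------------------
  -- First sup: S1 s - log s → log dbar
  ------------------------------------------------------------------
  -- part over A tends to -∞ after subtracting log s
  have hAlim : Tendsto (fun s : ℝ => A.sup' hA fun i => Real.log (g i s / g i 0)) atTop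
      (nhds (A.sup' hA fun i => Real.log (c i / g i 0))) := by
    refine Tendsto.finset_sup'_nhds_apply hA fun i hi => ?_
    exact (Real.continuousAt_log (ne_of_gt (div_pos (hc i hi).1 (g0pos i)))).tendsto.comp
      ((hc i hi).2.div_const _)
  have hA1 : Tendsto (fun s : ℝ => (A.sup' hA fun i => Real.log (g i s / g i 0)) - Real.log s)
      atTop atBot := by
    have : Tendsto (fun s : ℝ => -Real.log s) atTop atBot :=
      tendsto_neg_atBot_iff.2 Real.tendsto_log_atTop
    simpa [sub_eq_add_neg] using hAlim.add_atBot this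
  -- part over B
  have hB1 : Tendsto (fun s : ℝ => (B.sup' hB fun i => Real.log (g i s / g i 0)) - Real.log s)
      atTop (nhds (Real.log dbar)) := by
    have hsupeq : (B.sup' hB fun i => Real.log (d i / g i 0)) = Real.log dbar := by
      obtain ⟨j, hj, hje⟩ := Finset.exists_mem_eq_sup' hB fun i => d i / g i 0
      refine le_antisymm (Finset.sup'_le _ _ fun i hi =>
        Real.log_le_log (div_pos (hd i hi).1 (g0pos i))
          (hdbar_def ▸ Finset.le_sup' (fun i => d i / g i 0) hi)) ?_
      rw [hdbar_def, hje]
      exact Finset.le_sup' (fun i => Real.log (d i / g i 0)) hj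
    have heach : ∀ i ∈ B, Tendsto (fun s : ℝ => Real.log (g i s / g i 0) - Real.log s)
        atTop (nhds (Real.log (d i / g i 0))) := by
      intro i hi
      have h1 : Tendsto (fun s : ℝ => Real.log (g i s / s) - Real.log (g i 0)) atTop
          (nhds (Real.log (d i) - Real.log (g i 0))) :=
        ((Real.continuousAt_log (ne_of_gt (hd i hi).1)).tendsto.comp (hd i hi).2).sub_const _
      rw [← Real.log_div (ne_of_gt (hd i hi).1) (ne_of_gt (g0pos i))] at h1
      refine h1.congr' ?_
      filter_upwards [eventually_gt_atTop (0 : ℝ)] with s hs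
      rw [Real.log_div (ne_of_gt (hgpos i s hs.le)) (ne_of_gt hs),
        Real.log_div (ne_of_gt (hgpos i s hs.le)) (ne_of_gt (g0pos i))]
      ring
    have := Tendsto.finset_sup'_nhds_apply hB heach
    rw [hsupeq] at this
    refine this.congr fun s => ?_
    exact (Finset.comp_sup'_eq_sup'_comp hB (fun x : ℝ => x - Real.log s)
      fun x y => (max_sub_sub_right x y _).symm).symm
  have hS1 : Tendsto (fun s : ℝ =>
      (Finset.univ.sup' Finset.univ_nonempty fun i => Real.log (g i s / g i 0)) - Real.log s)
      atTop (nhds (Real.log dbar)) := by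
    have := tendsto_max_of_atBot_left hA1 hB1
    refine this.congr fun s => ?_
    rw [key, max_sub_sub_right]
  ------------------------------------------------------------------
  -- Second sup: S2 s → - log dlow
  ------------------------------------------------------------------
  have hA2 : Tendsto (fun s : ℝ => A.sup' hA fun i => Real.log (g i 0 / g i s)) atTop
      (nhds (A.sup' hA fun i => Real.log (g i 0 / c i))) := by
    refine Tendsto.finset_sup'_nhds_apply hA fun i hi => ?_
    exact (Real.continuousAt_log (ne_of_gt (div_pos (g0pos i) (hc i hi).1))).tendsto.comp
      ((tendsto_const_nhds.div (hc i hi).2 (ne_of_gt (hc i hi).1)))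
  have hB2 : Tendsto (fun s : ℝ => B.sup' hB fun i => Real.log (g i 0 / g i s)) atTop atBot := by
    refine tendsto_sup'_atBot B hB fun i hi => ?_
    have hgs : Tendsto (fun s : ℝ => g i s) atTop atTop := by
      have : Tendsto (fun s : ℝ => g i s / s * s) atTop atTop :=
        ((hd i hi).2).pos_mul_atTop (hd i hi).1 tendsto_id
      refine this.congr' ?_
      filter_upwards [eventually_gt_atTop (0 : ℝ)] with s hs
      field_simp
    have htend0 : Tendsto (fun s : ℝ => g i 0 / g i s) atTop (nhds 0) :=
      tendsto_const_nhds.div_atTop hgs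
    have hmem : ∀ᶠ s : ℝ in atTop, g i 0 / g i s ∈ Set.Ioi (0 : ℝ) := by
      filter_upwards [eventually_ge_atTop (0 : ℝ)] with s hs
      exact div_pos (g0pos i) (hgpos i s hs)
    exact Real.tendsto_log_nhdsGT_zero.comp
      (tendsto_nhdsWithin_iff.2 ⟨htend0, hmem⟩)
  have hsupA2 : (A.sup' hA fun i => Real.log (g i 0 / c i)) = -Real.log dlow := by
    obtain ⟨j, hj, hje⟩ := Finset.exists_mem_eq_inf' hA fun i => c i / g i 0
    refine le_antisymm (Finset.sup'_le _ _ fun i hi => ?_) ?_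
    · rw [show g i 0 / c i = (c i / g i 0)⁻¹ by rw [inv_div], Real.log_inv, neg_le_neg_iff]
      exact Real.log_le_log hdlow_pos (Finset.inf'_le _ hi)
    · rw [hdlow_def, hje, ← Real.log_inv, inv_div]
      exact Finset.le_sup' (fun i => Real.log (g i 0 / c i)) hj
  have hS2 : Tendsto (fun s : ℝ =>
      Finset.univ.sup' Finset.univ_nonempty fun i => Real.log (g i 0 / g i s))
      atTop (nhds (-Real.log dlow)) := by
    rw [← hsupA2]
    have := tendsto_max_of_atBot_left hB2 hA2
    refine (this.congr fun s => ?_)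
    rw [key, max_comm]
  ------------------------------------------------------------------
  -- assemble
  ------------------------------------------------------------------
  have hcomb := (hS1.const_mul (1 / 2 : ℝ)).add (hS2.const_mul (1 / 2 : ℝ))
  have hval : (1 / 2 : ℝ) * Real.log dbar + (1 / 2 : ℝ) * (-Real.log dlow)
      = (1 / 2) * Real.log (dbar / dlow) := by
    rw [Real.log_div (ne_of_gt hdbar_pos) (ne_of_gt hdlow_pos)]
    ring
  rw [← hval]
  refine hcomb.congr fun s => ?_
  simp only [Dtil]
  ring
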